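/- Every 2-solvable distribution on the path P_n has at least n+1 pebbles. -/
import Mathlib


open SimpleGraph

variable {V : Type*}

/-- Apply a pebbling move along the ordered pair `e`. -/
def applyMove [DecidableEq V] (D : V → ℕ) (e : V × V) : V → ℕ :=
  fun w => if w = e.1 then D w - 2 else if w = e.2 then D w + 1 else D w

/-- A list of ordered pairs is a valid pebbling sequence from `D`. -/
def ValidSeq [DecidableEq V] (G : SimpleGraph V) : (V → ℕ) → List (V × V) → Prop
  | _, [] => True
  | D, e :: l => G.Adj e.1 e.2 ∧ 2 ≤ D e.1 ∧ ValidSeq G (applyMove D e) l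

def applySeq [DecidableEq V] (D : V → ℕ) : List (V × V) → (V → ℕ)
  | [] => D
  | e :: l => applySeq (applyMove D e) l

/-- `r` is `m`-reachable under `D`. -/
def Reaches [DecidableEq V] (G : SimpleGraph V) (D : V → ℕ) (r : V) (m : ℕ) : Prop :=
  ∃ l : List (V × V), ValidSeq G D l ∧ m ≤ applySeq D l r

def Solvable [DecidableEq V] (G : SimpleGraph V) (D : V → ℕ) : Prop :=
  ∀ r : V, Reaches G D r 1

noncomputable def pebNumTo [Fintype V] [DecidableEq V] (G : SimpleGraph V) (r : V) : ℕ :=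
  sInf {k : ℕ | ∀ D : V → ℕ, (∑ v, D v) = k → Reaches G D r 1}

noncomputable def pebNum [Fintype V] [DecidableEq V] (G : SimpleGraph V) : ℕ :=
  sInf {k : ℕ | ∀ D : V → ℕ, (∑ v, D v) = k → Solvable G D}

noncomputable def optPebNum [Fintype V] [DecidableEq V] (G : SimpleGraph V) : ℕ :=
  sInf {k : ℕ | ∃ D : V → ℕ, (∑ v, D v) = k ∧ Solvable G D}

namespace PathPebbling

/-- Left greedy pebbling potential: max pebbles collectible at `j` using vertices `0..j`. -/
def lw (E : ℕ → ℕ) : ℕ → ℕ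
  | 0 => E 0
  | j + 1 => E (j + 1) + lw E j / 2

/-- Right greedy pebbling potential at `j` with fuel `f` (using vertices `j..j+f-1`). -/
def rwt (E : ℕ → ℕ) : ℕ → ℕ → ℕ
  | 0, _ => 0
  | f + 1, j => E j + rwt E f (j + 1) / 2

lemma lw_zero (E : ℕ → ℕ) : lw E 0 = E 0 := rfl
lemma lw_succ (E : ℕ → ℕ) (j : ℕ) : lw E (j + 1) = E (j + 1) + lw E j / 2 := rfl
lemma rwt_zero (E : ℕ → ℕ) (j : ℕ) : rwt E 0 j = 0 := rfl
lemma rwt_succ (E : ℕ → ℕ) (f j : ℕ) : rwt E (f + 1) j = E j + rwt E f (j + 1) / 2 := rfl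

lemma rwt_one (E : ℕ → ℕ) (j : ℕ) : rwt E 1 j = E j := by
  show E j + rwt E 0 (j + 1) / 2 = E j
  simp [rwt_zero]

/-- Total pebbling potential targeting `r` in a path of length `n`. -/
def phi (n : ℕ) (E : ℕ → ℕ) (r : ℕ) : ℕ := lw E r + rwt E (n - (r + 1)) (r + 1) / 2

lemma self_le_lw (E : ℕ → ℕ) (j : ℕ) : E j ≤ lw E j := by
  cases j with
  | zero => exact le_rfl
  | succ j => exact Nat.le_add_right _ _

lemma lw_congr {E F : ℕ → ℕ} (j : ℕ) (h : ∀ i, i ≤ j → E i = F i) : lw E j = lw F j := by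
  induction j with
  | zero => exact h 0 le_rfl
  | succ j ih =>
    rw [lw_succ, lw_succ, h (j + 1) le_rfl, ih (fun i hi => h i (le_trans hi (Nat.le_succ j)))]

lemma rwt_congr {E F : ℕ → ℕ} (f : ℕ) : ∀ j, (∀ i, j ≤ i → E i = F i) → rwt E f j = rwt F f j := by
  induction f with
  | zero => intro j _; rfl
  | succ f ih =>
    intro j h
    rw [rwt_succ, rwt_succ, h j le_rfl, ih (j + 1) (fun i hi => h i (by omega))]

lemma lw_top_add {E E' : ℕ → ℕ} {j c : ℕ} (hA : E' j = E j + c)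
    (hO : ∀ i, i < j → E' i = E i) : lw E' j = lw E j + c := by
  cases j with
  | zero => rw [lw_zero, lw_zero, hA]
  | succ j =>
    rw [lw_succ, lw_succ, hA, lw_congr j (fun i hi => hO i (by omega))]
    omega

lemma lw_top_sub {E E' : ℕ → ℕ} {j : ℕ} (h2 : 2 ≤ E j) (hA : E' j = E j - 2)
    (hO : ∀ i, i < j → E' i = E i) : lw E' j = lw E j - 2 ∧ 2 ≤ lw E j := by
  cases j with
  | zero => rw [lw_zero, lw_zero, hA]; omega
  | succ j =>
    rw [lw_succ, lw_succ, hA, lw_congr j (fun i hi => hO i (by omega))]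
    omega

lemma rwt_top_add {E E' : ℕ → ℕ} {j f c : ℕ} (hA : E' j = E j + c)
    (hO : ∀ i, j < i → E' i = E i) : rwt E' (f + 1) j = rwt E (f + 1) j + c := by
  rw [rwt_succ, rwt_succ, hA, rwt_congr f (j + 1) (fun i hi => hO i (by omega))]
  omega

lemma rwt_top_sub {E E' : ℕ → ℕ} {j f : ℕ} (h2 : 2 ≤ E j) (hA : E' j = E j - 2)
    (hO : ∀ i, j < i → E' i = E i) :
    rwt E' (f + 1) j = rwt E (f + 1) j - 2 ∧ 2 ≤ rwt E (f + 1) j := by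
  rw [rwt_succ, rwt_succ, hA, rwt_congr f (j + 1) (fun i hi => hO i (by omega))]
  omega

/-- A move from `a` to `a+1` preserves the left potential at indices above `a`. -/
lemma lw_move_right {E E' : ℕ → ℕ} {a : ℕ} (h2 : 2 ≤ E a)
    (hA : E' a = E a - 2) (hB : E' (a + 1) = E (a + 1) + 1)
    (hO : ∀ i, i ≠ a → i ≠ a + 1 → E' i = E i) :
    ∀ k, lw E' (a + 1 + k) = lw E (a + 1 + k) := by
  have hsub := lw_top_sub h2 hA (fun i hi => hO i (by omega) (by omega))
  have hEa : 2 ≤ lw E a := le_trans h2 (self_le_lw E a)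
  intro k
  induction k with
  | zero =>
    show lw E' (a + 1) = lw E (a + 1)
    rw [lw_succ, lw_succ, hB, hsub.1]
    omega
  | succ k ih =>
    show lw E' (a + 1 + k + 1) = lw E (a + 1 + k + 1)
    rw [lw_succ, lw_succ, hO (a + 1 + k + 1) (by omega) (by omega), ih]

/-- A move from `a+1` to `a` does not increase the left potential at indices above `a`. -/
lemma lw_move_left {E E' : ℕ → ℕ} {a : ℕ} (h2 : 2 ≤ E (a + 1))
    (hA : E' (a + 1) = E (a + 1) - 2) (hB : E' a = E a + 1)
    (hO : ∀ i, i ≠ a → i ≠ a + 1 → E' i = E i) :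
    ∀ k, lw E' (a + 1 + k) ≤ lw E (a + 1 + k) := by
  have hadd := lw_top_add (c := 1) hB (fun i hi => hO i (by omega) (by omega))
  intro k
  induction k with
  | zero =>
    show lw E' (a + 1) ≤ lw E (a + 1)
    rw [lw_succ, lw_succ, hA, hadd]
    omega
  | succ k ih =>
    show lw E' (a + 1 + k + 1) ≤ lw E (a + 1 + k + 1)
    rw [lw_succ, lw_succ, hO (a + 1 + k + 1) (by omega) (by omega)]
    exact Nat.add_le_add_left (Nat.div_le_div_right ih) _

/-- A move from `a+1` down to `a` preserves the right potential at indices `≤ a`. -/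
lemma rwt_move_down {E E' : ℕ → ℕ} {a : ℕ} (h2 : 2 ≤ E (a + 1))
    (hA : E' (a + 1) = E (a + 1) - 2) (hB : E' a = E a + 1)
    (hO : ∀ i, i ≠ a → i ≠ a + 1 → E' i = E i) :
    ∀ f j, j ≤ a → a + 2 ≤ j + f → rwt E' f j = rwt E f j := by
  intro f
  induction f with
  | zero => intro j h1 h2'; omega
  | succ f ih =>
    intro j hja hfuel
    rcases eq_or_lt_of_le hja with heq | hlt
    · subst heq
      obtain ⟨g, rfl⟩ : ∃ g, f = g + 1 := ⟨f - 1, by omega⟩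
      have hsub := rwt_top_sub (f := g) h2 hA (fun i hi => hO i (by omega) (by omega))
      rw [rwt_succ E' (g + 1) _, rwt_succ E (g + 1) _, hB, hsub.1]
      have := hsub.2
      omega
    · rw [rwt_succ, rwt_succ, hO j (by omega) (by omega),
        ih (j + 1) (by omega) (by omega)]

/-- A move from `a` up to `a+1` does not increase the right potential at indices `≤ a`. -/
lemma rwt_move_up {E E' : ℕ → ℕ} {a : ℕ} (h2 : 2 ≤ E a)
    (hA : E' a = E a - 2) (hB : E' (a + 1) = E (a + 1) + 1)
    (hO : ∀ i, i ≠ a → i ≠ a + 1 → E' i = E i) :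
    ∀ f j, j ≤ a → a + 2 ≤ j + f → rwt E' f j ≤ rwt E f j := by
  intro f
  induction f with
  | zero => intro j h1 h2'; omega
  | succ f ih =>
    intro j hja hfuel
    rcases eq_or_lt_of_le hja with heq | hlt
    · subst heq
      obtain ⟨g, rfl⟩ : ∃ g, f = g + 1 := ⟨f - 1, by omega⟩
      have hadd := rwt_top_add (f := g) (c := 1) hB (fun i hi => hO i (by omega) (by omega))
      rw [rwt_succ E' (g + 1) _, rwt_succ E (g + 1) _, hA, hadd]
      omega
    · rw [rwt_succ, rwt_succ, hO j (by omega) (by omega)]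
      exact Nat.add_le_add_left (Nat.div_le_div_right (ih (j + 1) (by omega) (by omega))) _

/-- The potential `phi` does not increase under a pebbling move on the path. -/
lemma phi_move {n : ℕ} {E E' : ℕ → ℕ} {a b : ℕ} (hab : b = a + 1 ∨ a = b + 1)
    (ha : a < n) (hb : b < n) (h2 : 2 ≤ E a)
    (hA : E' a = E a - 2) (hB : E' b = E b + 1)
    (hO : ∀ i, i ≠ a → i ≠ b → E' i = E i)
    {r : ℕ} (hr : r < n) : phi n E' r ≤ phi n E r := by
  unfold phi
  rcases hab with rfl | rfl
  · -- move right : from a to a+1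
    by_cases hca : a + 1 ≤ r
    · obtain ⟨k, rfl⟩ : ∃ k, r = a + 1 + k := ⟨r - (a + 1), by omega⟩
      rw [lw_move_right h2 hA hB hO k,
        rwt_congr (n - (a + 1 + k + 1)) (a + 1 + k + 1)
          (fun i hi => hO i (by omega) (by omega))]
    · by_cases hcb : r < a
      · rw [lw_congr r (fun i hi => hO i (by omega) (by omega))]
        exact Nat.add_le_add_left (Nat.div_le_div_right
          (rwt_move_up h2 hA hB hO (n - (r + 1)) (r + 1) (by omega) (by omega))) _
      · have hra : r = a := by omega
        subst hra
        have hsub := lw_top_sub h2 hA (fun i hi => hO i (by omega) (by omega))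
        obtain ⟨g, hg⟩ : ∃ g, n - (r + 1) = g + 1 := ⟨n - (r + 1) - 1, by omega⟩
        rw [hg]
        have hadd := rwt_top_add (f := g) (c := 1) hB (fun i hi => hO i (by omega) (by omega))
        rw [hsub.1, hadd]
        have := hsub.2
        omega
  · -- move left : from b+1 to b
    by_cases hca : b + 1 ≤ r
    · obtain ⟨k, rfl⟩ : ∃ k, r = b + 1 + k := ⟨r - (b + 1), by omega⟩
      rw [rwt_congr (n - (b + 1 + k + 1)) (b + 1 + k + 1)
        (fun i hi => hO i (by omega) (by omega))]
      exact Nat.add_le_add_right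
        (lw_move_left h2 hA hB (fun i h1 h3 => hO i h3 h1) k) _
    · by_cases hcb : r < b
      · rw [lw_congr r (fun i hi => hO i (by omega) (by omega))]
        exact Nat.add_le_add_left (Nat.div_le_div_right
          (le_of_eq (rwt_move_down h2 hA hB (fun i h1 h3 => hO i h3 h1) (n - (r + 1)) (r + 1)
            (by omega) (by omega)))) _
      · have hrb : r = b := by omega
        subst hrb
        have hadd := lw_top_add (c := 1) hB (fun i hi => hO i (by omega) (by omega))
        obtain ⟨g, hg⟩ : ∃ g, n - (r + 1) = g + 1 := ⟨n - (r + 1) - 1, by omega⟩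
        rw [hg, hadd]
        have hsub := rwt_top_sub (f := g) (j := r + 1) h2 hA
          (fun i hi => hO i (by omega) (by omega))
        rw [hsub.1]
        have := hsub.2
        omega

/-- Extend a distribution on `Fin n` to `ℕ` by zero. -/
def ext (n : ℕ) (D : Fin n → ℕ) : ℕ → ℕ := fun i => if h : i < n then D ⟨i, h⟩ else 0

lemma ext_val {n : ℕ} (D : Fin n → ℕ) (v : Fin n) : ext n D v.val = D v := by
  simp [ext, v.isLt]

lemma phi_valid_seq {n : ℕ} {r : ℕ} (hr : r < n) :
    ∀ (l : List (Fin n × Fin n)) (D : Fin n → ℕ), ValidSeq (pathGraph n) D l →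
      phi n (ext n (applySeq D l)) r ≤ phi n (ext n D) r := by
  intro l
  induction l with
  | nil => intro D _; exact le_rfl
  | cons e t ih =>
    intro D hv
    obtain ⟨hadj, h2, hrest⟩ := hv
    have hne : e.1 ≠ e.2 := hadj.ne
    have hadj' := (pathGraph_adj).mp hadj
    have step : phi n (ext n (applyMove D e)) r ≤ phi n (ext n D) r := by
      apply phi_move (a := e.1.val) (b := e.2.val) ?_ e.1.isLt e.2.isLt ?_ ?_ ?_ ?_ hr
      · rcases hadj' with h | h
        · exact Or.inl (by omega)
        · exact Or.inr (by omega)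
      · rw [ext_val]; exact h2
      · rw [ext_val D e.1, ext_val (applyMove D e) e.1]
        simp [applyMove]
      · rw [ext_val D e.2, ext_val (applyMove D e) e.2]
        simp [applyMove, hne.symm]
      · intro i hi1 hi2
        unfold ext
        split
        · next hlt =>
            have h1 : (⟨i, hlt⟩ : Fin n) ≠ e.1 := fun hq => hi1 (congrArg Fin.val hq)
            have h3 : (⟨i, hlt⟩ : Fin n) ≠ e.2 := fun hq => hi2 (congrArg Fin.val hq)
            simp [applyMove, h1, h3]
        · rfl
    exact le_trans (ih (applyMove D e) hrest) step

/-- The key arithmetic lemma: if every vertex has potential at least 2, then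
the total number of pebbles is at least `m` plus half the last left potential. -/
lemma key : ∀ (m : ℕ) (F : ℕ → ℕ), 1 ≤ m → (∀ r, r < m → 2 ≤ phi m F r) →
    m + lw F (m - 1) / 2 ≤ ∑ i ∈ Finset.range m, F i := by
  intro m
  induction m with
  | zero => intro F h _; omega
  | succ k ih =>
    intro F _ hcon
    cases k with
    | zero =>
      have h0 := hcon 0 (by omega)
      have e0 : phi 1 F 0 = F 0 := by
        unfold phi
        norm_num [rwt_zero, lw_zero]
      rw [e0] at h0
      rw [Finset.sum_range_one]
      simp only [Nat.sub_self]
      rw [lw_zero]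
      omega
    | succ j =>
      set F' : ℕ → ℕ := fun i => if i = j then F j + F (j + 1) / 2 else F i with hF'
      have hFj : F' j = F j + F (j + 1) / 2 := by simp [hF']
      have hFne : ∀ i, i ≠ j → F' i = F i := fun i hi => by simp [hF', hi]
      have hlw : lw F' j = lw F j + F (j + 1) / 2 :=
        lw_top_add hFj (fun i hi => hFne i (by omega))
      -- base constraint at r = j for the original distribution
      have hcj : 2 ≤ lw F j + F (j + 1) / 2 := by
        have := hcon j (by omega)
        unfold phi at this
        have e2 : j + 2 - (j + 1) = 1 := by omega
        rw [e2, rwt_one] at this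
        exact this
      -- right potential transfer
      have hrwt : ∀ g, ∀ j', 1 ≤ g → j' + g = j + 1 → rwt F' g j' = rwt F (g + 1) j' := by
        intro g
        induction g with
        | zero => intro j' h1 _; omega
        | succ g ihg =>
          intro j' _ hsum
          cases g with
          | zero =>
            have hj' : j' = j := by omega
            subst hj'
            simp only [rwt_succ, rwt_zero, hFj]
            omega
          | succ g' =>
            rw [rwt_succ F' (g' + 1) _, rwt_succ F (g' + 1 + 1) _, hFne j' (by omega),
              ihg (j' + 1) (by omega) (by omega)]
      -- constraints for the shortened path
      have hcon' : ∀ r, r < j + 1 → 2 ≤ phi (j + 1) F' r := by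
        intro r hrlt
        by_cases hrj : r < j
        · have horig := hcon r (by omega)
          unfold phi at horig ⊢
          rw [lw_congr r (fun i hi => hFne i (by omega))]
          have ef : j + 1 - (r + 1) = (j - r - 1) + 1 := by omega
          rw [ef, hrwt ((j - r - 1) + 1) (r + 1) (by omega) (by omega)]
          have ef2 : j + 2 - (r + 1) = (j - r - 1) + 1 + 1 := by omega
          rw [ef2] at horig
          exact horig
        · have hrj' : r = j := by omega
          unfold phi
          rw [hrj']
          have e1 : j + 1 - (j + 1) = 0 := by omega
          rw [e1, rwt_zero, hlw]
          omega
      have hIH := ih F' (by omega) hcon'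
      have hsum : ∑ i ∈ Finset.range (j + 1), F' i
          = (∑ i ∈ Finset.range (j + 1), F i) + F (j + 1) / 2 := by
        have hpt : ∀ i, F' i = F i + (if i = j then F (j + 1) / 2 else 0) := by
          intro i
          by_cases hi : i = j <;> simp [hF', hi]
        rw [Finset.sum_congr rfl (fun i _ => hpt i), Finset.sum_add_distrib,
          Finset.sum_ite_eq' (Finset.range (j + 1)) j]
        simp
      rw [Finset.sum_range_succ]
      have hlwtop : lw F (j + 1) = F (j + 1) + lw F j / 2 := lw_succ F j
      have e3 : j + 1 - 1 = j := by omega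
      rw [e3] at hIH
      have e4 : j + 2 - 1 = j + 1 := by omega
      rw [e4, hlwtop]
      rw [hsum, hlw] at hIH
      omega

end PathPebbling

theorem path_two_solvable (n : ℕ) (hn : 1 ≤ n) (D : Fin n → ℕ)
    (h : ∀ v : Fin n, Reaches (SimpleGraph.pathGraph n) D v 2) :
    n + 1 ≤ ∑ v, D v := by
  classical
  open PathPebbling in
  have hcon : ∀ r, r < n → 2 ≤ phi n (ext n D) r := by
    intro r hr
    obtain ⟨l, hv, h2⟩ := h ⟨r, hr⟩
    calc 2 ≤ applySeq D l ⟨r, hr⟩ := h2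
      _ = ext n (applySeq D l) r := (ext_val (applySeq D l) ⟨r, hr⟩).symm
      _ ≤ lw (ext n (applySeq D l)) r := self_le_lw _ _
      _ ≤ phi n (ext n (applySeq D l)) r := Nat.le_add_right _ _
      _ ≤ phi n (ext n D) r := phi_valid_seq hr l D hv
  have hkey := PathPebbling.key n (PathPebbling.ext n D) hn hcon
  have hlast : 2 ≤ PathPebbling.lw (PathPebbling.ext n D) (n - 1) := by
    have hc := hcon (n - 1) (by omega)
    unfold PathPebbling.phi at hc
    have e : n - (n - 1 + 1) = 0 := by omega
    rw [e, PathPebbling.rwt_zero] at hc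
    simpa using hc
  have hsum : ∑ i ∈ Finset.range n, PathPebbling.ext n D i = ∑ v, D v := by
    rw [← Fin.sum_univ_eq_sum_range]
    exact Finset.sum_congr rfl (fun v _ => PathPebbling.ext_val D v)
  omega
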